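/- Let x, y ∈ (Σ∪Γ)* be compatible words with lag(x) ≤ k and lag(y) ≤ k, and let diff(x,y) = (u,v). Then |u| ≤ k and |v| ≤ k. -/

import Mathlib

open List

/-- A language is regular. -/
def IsReg {α : Type} (L : Set (List α)) : Prop := Language.IsRegular L

/-- Erase output letters: keep the Σ-part of a synchronization word. -/
def piIn {σ γ : Type} (w : List (σ ⊕ γ)) : List σ := w.filterMap Sum.getLeft?
/-- Erase input letters: keep the Γ-part of a synchronization word. -/
def piOut {σ γ : Type} (w : List (σ ⊕ γ)) : List γ := w.filterMap Sum.getRight?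
/-- `⟦w⟧`, the pair synchronized by `w`. -/
def syncPair {σ γ : Type} (w : List (σ ⊕ γ)) : List σ × List γ := (piIn w, piOut w)
/-- `⟦L⟧`, the relation defined by a synchronization language. -/
def syncRel {σ γ : Type} (L : Set (List (σ ⊕ γ))) : Set (List σ × List γ) := syncPair '' L

def rdom {σ γ : Type} (R : Set (List σ × List γ)) : Set (List σ) := {u | ∃ v, (u, v) ∈ R}

/-- A recognizable relation: a finite union of products of regular languages. -/
def Recognizable {σ γ : Type} (R : Set (List σ × List γ)) : Prop :=
  ∃ (n : ℕ) (U : Fin n → Set (List σ)) (V : Fin n → Set (List γ)),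
    (∀ i, IsReg (U i) ∧ IsReg (V i)) ∧
    R = ⋃ i, {p : List σ × List γ | p.1 ∈ U i ∧ p.2 ∈ V i}

/-- lag of the (1-based) position `i` of `w`. -/
def lagAt {σ γ : Type} (w : List (σ ⊕ γ)) (i : ℕ) : ℕ :=
  ((((w.take i).countP Sum.isLeft : ℕ) : ℤ) - (((w.take i).countP Sum.isRight : ℕ) : ℤ)).natAbs

/-- maximal lag of a position of `w`. -/
def lagW {σ γ : Type} (w : List (σ ⊕ γ)) : ℕ := (Finset.range (w.length + 1)).sup (lagAt w)

/-- number of shifts of `w`. -/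
def shiftCount {σ γ : Type} (w : List (σ ⊕ γ)) : ℕ :=
  (w.zip w.tail).countP fun p => p.1.isLeft != p.2.isLeft

/-- the (0-based) list of shift positions of `w`, in increasing order. -/
def shiftList {σ γ : Type} (w : List (σ ⊕ γ)) : List ℕ :=
  (List.range w.length).filter fun j =>
    decide (j + 1 < w.length) &&
      decide ((w[j]?).map Sum.isLeft ≠ (w[j + 1]?).map Sum.isLeft)

/-- shiftlag of `w`: the largest `n` such that `w` has `n` consecutive shifts that are all
`≥n`-lagged. -/
noncomputable def shiftlagW {σ γ : Type} (w : List (σ ⊕ γ)) : ℕ :=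
  sSup {n : ℕ | ∃ l : List ℕ, l <:+: shiftList w ∧ l.length = n ∧ ∀ j ∈ l, n ≤ lagAt w (j + 1)}

def FiniteShift {σ γ : Type} (L : Set (List (σ ⊕ γ))) : Prop := ∃ k, ∀ w ∈ L, shiftCount w ≤ k
def FiniteLag {σ γ : Type} (L : Set (List (σ ⊕ γ))) : Prop := ∃ k, ∀ w ∈ L, lagW w ≤ k
def FiniteShiftlag {σ γ : Type} (L : Set (List (σ ⊕ γ))) : Prop := ∃ k, ∀ w ∈ L, shiftlagW w ≤ k

/-- left quotient `u⁻¹L`. -/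
def leftQuot {α : Type} (u : List α) (L : Set (List α)) : Set (List α) := {z | u ++ z ∈ L}

/-- `w ⪯_T w'` : `w` is at most as synchronous as `w'` inside `T`. -/
def syncLe {σ γ : Type} (T : Set (List (σ ⊕ γ))) (w w' : List (σ ⊕ γ)) : Prop :=
  ∀ i : ℕ, FiniteShift (leftQuot (w'.take i) T) → FiniteShift (leftQuot (w.take i) T)

def allsync {σ γ : Type} (S T : Set (List (σ ⊕ γ))) : Set (List (σ ⊕ γ)) :=
  {w | w ∈ T ∧ syncPair w ∈ syncRel S}

def maxsync {σ γ : Type} (S T : Set (List (σ ⊕ γ))) : Set (List (σ ⊕ γ)) :=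
  {w | w ∈ T ∧ syncPair w ∈ syncRel S ∧
    ∀ w' ∈ T, syncPair w' = syncPair w → syncLe T w' w}

def minsync {σ γ : Type} (S T : Set (List (σ ⊕ γ))) : Set (List (σ ⊕ γ)) :=
  {w | w ∈ T ∧ syncPair w ∈ syncRel S ∧
    ∀ w' ∈ T, syncPair w' = syncPair w → syncLe T w w'}

/-- `Rel(T)`: relations definable by regular subsets of `T`. -/
def RelOf {σ γ : Type} (T : Set (List (σ ⊕ γ))) : Set (Set (List σ × List γ)) :=
  {R | ∃ T' : Set (List (σ ⊕ γ)), T' ⊆ T ∧ IsReg T' ∧ syncRel T' = R}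

/-- the canonical synchronization language `(ΣΓ)*(Σ* + Γ*)` of automatic relations. -/
def CanonAut (σ γ : Type) : Set (List (σ ⊕ γ)) :=
  {w | ∃ (p : List (σ × γ)) (x : List σ) (y : List γ),
    (x = [] ∨ y = []) ∧
    w = (p.flatMap fun ab => [Sum.inl ab.1, Sum.inr ab.2]) ++ x.map Sum.inl ++ y.map Sum.inr}

/-- the canonical synchronization language `Σ*Γ*` of recognizable relations. -/
def InOut (σ γ : Type) : Set (List (σ ⊕ γ)) :=
  {w | ∃ (x : List σ) (y : List γ), w = x.map Sum.inl ++ y.map Sum.inr}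

/-- An automatic relation: definable by a regular subset of `(ΣΓ)*(Σ* + Γ*)`. -/
def Automatic {σ γ : Type} (R : Set (List σ × List γ)) : Prop :=
  ∃ L : Set (List (σ ⊕ γ)), L ⊆ CanonAut σ γ ∧ IsReg L ∧ syncRel L = R

/-- `x` and `y` are compatible: equal length and extendable to a common pair. -/
def Compatible {σ γ : Type} (x y : List (σ ⊕ γ)) : Prop :=
  x.length = y.length ∧ ∃ u v : List (σ ⊕ γ), syncPair (x ++ u) = syncPair (y ++ v)

/-- `diff(x,y) = (u,v)`: `u,v` are the shortest words with `⟦xu⟧ = ⟦yv⟧`. -/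
def IsDiff {σ γ : Type} (x y u v : List (σ ⊕ γ)) : Prop :=
  syncPair (x ++ u) = syncPair (y ++ v) ∧
    ∀ u' v' : List (σ ⊕ γ), syncPair (x ++ u') = syncPair (y ++ v') →
      u.length ≤ u'.length ∧ v.length ≤ v'.length

/-!
Say `y` has read no more input than `x`. As `x` and `y` extend to a common pair, `π_i(x) = π_i(y) t`,
and as `|x| = |y|`, `π_o(y) = π_o(x) s` with `|s| = |t| =: d`. Then `⟦x s⟧ = ⟦y t⟧`, so minimality
of `diff(x, y)` gives `|u|, |v| ≤ d`; but the final lags of `x` and `y` differ by `2d`, so `d ≤ k`.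
-/

section Sync

variable {σ γ : Type}

lemma piIn_append (w w' : List (σ ⊕ γ)) : piIn (w ++ w') = piIn w ++ piIn w' :=
  List.filterMap_append ..

lemma piOut_append (w w' : List (σ ⊕ γ)) : piOut (w ++ w') = piOut w ++ piOut w' :=
  List.filterMap_append ..

lemma syncPair_append_map_inl (w : List (σ ⊕ γ)) (t : List σ) :
    syncPair (w ++ t.map Sum.inl) = (piIn w ++ t, piOut w) := by
  simp [syncPair, piIn, piOut, List.filterMap_map, Function.comp_def]

lemma syncPair_append_map_inr (w : List (σ ⊕ γ)) (s : List γ) :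
    syncPair (w ++ s.map Sum.inr) = (piIn w, piOut w ++ s) := by
  simp [syncPair, piIn, piOut, List.filterMap_map, Function.comp_def]

lemma length_piIn_add_length_piOut (w : List (σ ⊕ γ)) :
    (piIn w).length + (piOut w).length = w.length := by
  induction w with
  | nil => rfl
  | cons a t ih => cases a <;> simp [piIn, piOut, List.filterMap_cons] at ih ⊢ <;> omega

lemma countP_isLeft_eq_length_piIn (w : List (σ ⊕ γ)) :
    w.countP Sum.isLeft = (piIn w).length := by
  induction w with
  | nil => rfl
  | cons a t ih => cases a <;> simp [piIn, List.countP_cons, List.filterMap_cons, ih]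

lemma countP_isRight_eq_length_piOut (w : List (σ ⊕ γ)) :
    w.countP Sum.isRight = (piOut w).length := by
  induction w with
  | nil => rfl
  | cons a t ih => cases a <;> simp [piOut, List.countP_cons, List.filterMap_cons, ih]

lemma lagAt_length (w : List (σ ⊕ γ)) :
    lagAt w w.length = (((piIn w).length : ℤ) - (piOut w).length).natAbs := by
  rw [lagAt, List.take_length, countP_isLeft_eq_length_piIn, countP_isRight_eq_length_piOut]

lemma lagAt_length_le_lagW (w : List (σ ⊕ γ)) : lagAt w w.length ≤ lagW w :=
  Finset.le_sup (f := lagAt w) (by simp)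

lemma Compatible.symm {x y : List (σ ⊕ γ)} (h : Compatible x y) : Compatible y x :=
  let ⟨hlen, u, v, huv⟩ := h
  ⟨hlen.symm, v, u, huv.symm⟩

lemma IsDiff.symm {x y u v : List (σ ⊕ γ)} (h : IsDiff x y u v) : IsDiff y x v u :=
  ⟨h.1.symm, fun u' v' h' => (h.2 v' u' h'.symm).symm⟩

lemma Compatible.exists_piIn_append_and_piOut_append {x y : List (σ ⊕ γ)} (hc : Compatible x y)
    (h : (piIn y).length ≤ (piIn x).length) :
    ∃ (t : List σ) (s : List γ), piIn y ++ t = piIn x ∧ piOut x ++ s = piOut y := by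
  obtain ⟨hlen, u, v, huv⟩ := hc
  have hIn : piIn x ++ piIn u = piIn y ++ piIn v := by
    simpa [syncPair, piIn_append] using congrArg Prod.fst huv
  have hOut : piOut x ++ piOut u = piOut y ++ piOut v := by
    simpa [syncPair, piOut_append] using congrArg Prod.snd huv
  have hOutLen : (piOut x).length ≤ (piOut y).length := by
    have := length_piIn_add_length_piOut x
    have := length_piIn_add_length_piOut y
    omega
  obtain ⟨t, ht⟩ : piIn y <+: piIn x :=
    List.prefix_of_prefix_length_le (l₃ := piIn x ++ piIn u)
      (hIn ▸ List.prefix_append _ _) (List.prefix_append _ _) h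
  obtain ⟨s, hs⟩ : piOut x <+: piOut y :=
    List.prefix_of_prefix_length_le (l₃ := piOut x ++ piOut u)
      (List.prefix_append _ _) (hOut ▸ List.prefix_append _ _) hOutLen
  exact ⟨t, s, ht, hs⟩

lemma IsDiff.two_mul_length_le {x y u v : List (σ ⊕ γ)} (hc : Compatible x y)
    (hd : IsDiff x y u v) :
    2 * u.length ≤ lagAt x x.length + lagAt y y.length ∧
      2 * v.length ≤ lagAt x x.length + lagAt y y.length := by
  wlog h : (piIn y).length ≤ (piIn x).length generalizing x y u v
  · have := this hc.symm hd.symm (by omega)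
    omega
  obtain ⟨t, s, ht, hs⟩ := hc.exists_piIn_append_and_piOut_append h
  have hsync : syncPair (x ++ s.map Sum.inr) = syncPair (y ++ t.map Sum.inl) := by
    rw [syncPair_append_map_inl, syncPair_append_map_inr, ht, hs]
  have hmin := hd.2 _ _ hsync
  simp only [List.length_map] at hmin
  have hlenx := length_piIn_add_length_piOut x
  have hleny := length_piIn_add_length_piOut y
  have hlen := hc.1
  have hlent := congrArg List.length ht
  have hlens := congrArg List.length hs
  simp only [List.length_append] at hlent hlens
  rw [lagAt_length, lagAt_length]
  omega

end Sync

/-- if `x, y` are compatible with `lag(x) ≤ k`, `lag(y) ≤ k` and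
`diff(x,y) = (u,v)`, then `|u| ≤ k` and `|v| ≤ k`. -/
theorem stmt13 {σ γ : Type} (x y u v : List (σ ⊕ γ)) (k : ℕ)
    (hc : Compatible x y) (hd : IsDiff x y u v)
    (hx : lagW x ≤ k) (hy : lagW y ≤ k) :
    u.length ≤ k ∧ v.length ≤ k := by
  have hlagx := (lagAt_length_le_lagW x).trans hx
  have hlagy := (lagAt_length_le_lagW y).trans hy
  have := hd.two_mul_length_le hc
  omega
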